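/- Let p be a real number with 0 < p < 1/2 and let ℓ ≥ 1 and i ≥ 0 be integers. There exists an integer n_0 such that for all n > n_0, μ_p(tilde{F}^ℓ ∪ bar{F}^ℓ_i) < 1.001·f(ℓ, i, p), where the families are taken in 2^[n]. -/

import Mathlib

open Finset

open scoped Classical

noncomputable section

/-- The `p`-weight of a family of subsets of `[n] = {1,…,n}`. -/
def mu (n : ℕ) (p : ℝ) (𝓕 : Finset (Finset ℕ)) : ℝ :=
  ∑ F ∈ 𝓕, p ^ F.card * (1 - p) ^ (n - F.card)

/-- Two families are cross `t`-intersecting. -/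
def CrossIntersecting (t : ℕ) (𝓐 𝓑 : Finset (Finset ℕ)) : Prop :=
  ∀ A ∈ 𝓐, ∀ B ∈ 𝓑, t ≤ (A ∩ B).card

/-- The Frankl family `F_i^ℓ = {F ⊆ [n] : |F ∩ [ℓ+2i]| ≥ ℓ+i}`. -/
def FF (n ℓ i : ℕ) : Finset (Finset ℕ) :=
  (Finset.Icc 1 n).powerset.filter fun F => ℓ + i ≤ (F ∩ Finset.Icc 1 (ℓ + 2 * i)).card

/-- `F` reaches level `ℓ`: there is `0 ≤ j ≤ n` with `2|F ∩ [j]| ≥ j + ℓ`. -/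
def Reaches (n ℓ : ℕ) (F : Finset ℕ) : Prop :=
  ∃ j ≤ n, j + ℓ ≤ 2 * (F ∩ Finset.Icc 1 j).card

/-- The number of steps `0 ≤ j ≤ n` at which `F` hits level `ℓ`, i.e. `2|F ∩ [j]| = j + ℓ`. -/
def hitCount (n ℓ : ℕ) (F : Finset ℕ) : ℕ :=
  ((Finset.range (n + 1)).filter fun j => 2 * (F ∩ Finset.Icc 1 j).card = j + ℓ).card

/-- `F^ℓ`: all subsets of `[n]` reaching level `ℓ`. -/
def Fwalk (n ℓ : ℕ) : Finset (Finset ℕ) :=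
  (Finset.Icc 1 n).powerset.filter fun F => Reaches n ℓ F

/-- `tilde F^ℓ`: all subsets of `[n]` reaching level `ℓ+1`. -/
def Ftilde (n ℓ : ℕ) : Finset (Finset ℕ) :=
  (Finset.Icc 1 n).powerset.filter fun F => Reaches n (ℓ + 1) F

/-- `hat F^ℓ`: subsets not reaching level `ℓ+1` and hitting level `ℓ` exactly once. -/
def Fhat (n ℓ : ℕ) : Finset (Finset ℕ) :=
  (Finset.Icc 1 n).powerset.filter fun F => ¬ Reaches n (ℓ + 1) F ∧ hitCount n ℓ F = 1

/-- `ddot F^ℓ`: subsets not reaching level `ℓ+1` and hitting level `ℓ` at least twice. -/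
def Fddot (n ℓ : ℕ) : Finset (Finset ℕ) :=
  (Finset.Icc 1 n).powerset.filter fun F => ¬ Reaches n (ℓ + 1) F ∧ 2 ≤ hitCount n ℓ F

/-- The `(i,j)`-shift of a single set `F`, relative to the family `𝓕`. -/
def shiftSet (i j : ℕ) (𝓕 : Finset (Finset ℕ)) (F : Finset ℕ) : Finset ℕ :=
  if j ∈ F ∧ i ∉ F ∧ insert i (F.erase j) ∉ 𝓕 then insert i (F.erase j) else F

/-- The `(i,j)`-shift `s_{ij}(𝓕)` of a family `𝓕`. -/
def shiftFam (i j : ℕ) (𝓕 : Finset (Finset ℕ)) : Finset (Finset ℕ) :=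
  𝓕.image (shiftSet i j 𝓕)

/-- A family is shifted if all shifts `s_{ij}`, `1 ≤ i < j ≤ n`, fix it. -/
def Shifted (n : ℕ) (𝓕 : Finset (Finset ℕ)) : Prop :=
  ∀ i j : ℕ, 1 ≤ i → i < j → j ≤ n → shiftFam i j 𝓕 = 𝓕

/-- A family of subsets of `[n]` is inclusion maximal. -/
def InclMax (n : ℕ) (𝓕 : Finset (Finset ℕ)) : Prop :=
  ∀ F ∈ 𝓕, ∀ F' : Finset ℕ, F ⊆ F' → F' ⊆ Finset.Icc 1 n → F' ∈ 𝓕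

/-- `λ(𝓕)`: the largest `λ ≥ 0` such that every member of `𝓕` reaches level `λ`. -/
def lam (n : ℕ) (𝓕 : Finset (Finset ℕ)) : ℕ :=
  Nat.findGreatest (fun ℓ => ∀ F ∈ 𝓕, Reaches n ℓ F) n

/-- Two families of subsets of `[n]` are isomorphic via a permutation of `[n]`. -/
def Isom (n : ℕ) (𝓖₁ 𝓖₂ : Finset (Finset ℕ)) : Prop :=
  ∃ σ : Equiv.Perm ℕ, (∀ k ∈ Finset.Icc 1 n, σ k ∈ Finset.Icc 1 n) ∧
    𝓖₁ = 𝓖₂.image fun G => G.image σ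

/-- The quantity `f(ℓ, i, p)` from Ahlswede–Khachatrian type estimates. -/
def fLP (ℓ i : ℕ) (p : ℝ) : ℝ :=
  (p / (1 - p)) ^ (ℓ + 1) +
    (Nat.choose (ℓ + 2 * i) i : ℝ) * ((ℓ + 1 : ℝ) / (ℓ + i + 1)) * p ^ (ℓ + i) *
      (1 - p) ^ i * (1 - p / (1 - p))

/-- The walk `D_s^t(i) = [t−1] ∪ {t+s,…,t+2s} ∪ {t+2s+i+2k : k ≥ 1} ∩ [n]`. -/
def DD (n t s i : ℕ) : Finset ℕ :=
  Finset.Icc 1 (t - 1) ∪ Finset.Icc (t + s) (t + 2 * s) ∪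
    ((Finset.Icc 1 n).filter fun m => ∃ k ∈ Finset.Icc 1 n, m = t + 2 * s + i + 2 * k)

end

/-!
Read `F ⊆ [n]` as a ±1 walk that steps up at time `j` iff `j ∈ F`, and put `α = p/(1-p)`,
`ρ = 2√(p(1-p)) < 1`. By the first-step recursion, the walk reaches level `m` with probability
at most `α^m`, and at least `α^m - √α^(m+1) ρ^n`; so `tilde F^ℓ` weighs at most `α^(ℓ+1)`.
A member of `bar F^ℓ_i` is a prefix of length `t = ℓ+2i` that ends at level `ℓ` without reaching
`ℓ+1`, followed by a walk that never reaches level `1`. The reflection principle bounds the number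
of prefixes by `C(t,i)(ℓ+1)/(ℓ+i+1)`, each of weight `p^(ℓ+i)(1-p)^i`, and the suffix stays below
level `1` with probability at most `1 - α + α ρ^(n-t)`. Summing gives `f(ℓ,i,p) + O(ρ^n)`.
-/

section Weight

variable {p : ℝ}

lemma mu_nonneg (hp : 0 ≤ p) (hp' : p ≤ 1) (n : ℕ) (𝓕 : Finset (Finset ℕ)) :
    0 ≤ mu n p 𝓕 :=
  sum_nonneg fun _ _ => mul_nonneg (pow_nonneg hp _) (pow_nonneg (sub_nonneg.2 hp') _)

lemma mu_union_le (hp : 0 ≤ p) (hp' : p ≤ 1) (n : ℕ) (𝓕 𝓖 : Finset (Finset ℕ)) :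
    mu n p (𝓕 ∪ 𝓖) ≤ mu n p 𝓕 + mu n p 𝓖 := by
  have h := sum_union_inter (s₁ := 𝓕) (s₂ := 𝓖) (f := fun F => p ^ #F * (1 - p) ^ (n - #F))
  have := mu_nonneg hp hp' n (𝓕 ∩ 𝓖)
  unfold mu at *
  linarith

lemma mu_powerset (p : ℝ) (n : ℕ) : mu n p (Icc 1 n).powerset = 1 := by
  have h := sum_powerset_apply_card (fun k => p ^ k * (1 - p) ^ (n - k)) (x := Icc 1 n)
  rw [Nat.card_Icc, Nat.add_sub_cancel] at h
  have hbinom := add_pow p (1 - p) n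
  rw [add_sub_cancel, one_pow] at hbinom
  rw [mu, h]
  exact (sum_congr rfl fun k _ => by rw [nsmul_eq_mul]; ring).trans hbinom.symm

lemma mu_filter_not (p : ℝ) (n : ℕ) (P : Finset ℕ → Prop) [DecidablePred P] :
    mu n p ((Icc 1 n).powerset.filter fun F => ¬ P F) =
      1 - mu n p ((Icc 1 n).powerset.filter P) := by
  have h := sum_filter_add_sum_filter_not (Icc 1 n).powerset P
    fun F => p ^ #F * (1 - p) ^ (n - #F)
  rw [← mu_powerset p n]
  unfold mu at *
  linarith

end Weight

section Concat

-- With `S ⊆ [t]` and `T ⊆ [r]`, this is the walk of `S` continued by the walk of `T`.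
def concat (t : ℕ) (S T : Finset ℕ) : Finset ℕ :=
  S ∪ T.image (· + t)

variable {t r : ℕ} {S T : Finset ℕ}

lemma concat_inter_Icc (hT : T ⊆ Icc 1 r) (j : ℕ) :
    concat t S T ∩ Icc 1 j = concat t (S ∩ Icc 1 j) (T ∩ Icc 1 (j - t)) := by
  ext x
  simp only [concat, mem_inter, mem_union, mem_image, mem_Icc]
  constructor
  · rintro ⟨hx | ⟨y, hy, rfl⟩, hx1, hxj⟩
    · exact Or.inl ⟨hx, hx1, hxj⟩
    · have := (mem_Icc.1 (hT hy)).1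
      exact Or.inr ⟨y, ⟨hy, this, by omega⟩, rfl⟩
  · rintro (⟨hx, hxj⟩ | ⟨y, ⟨hy, hy1, hyj⟩, rfl⟩)
    · exact ⟨Or.inl hx, hxj⟩
    · exact ⟨Or.inr ⟨y, hy, rfl⟩, by omega, by omega⟩

lemma card_concat (hS : S ⊆ Icc 1 t) (hT : T ⊆ Icc 1 r) :
    #(concat t S T) = #S + #T := by
  rw [concat, card_union_of_disjoint, card_image_of_injective _ (add_left_injective t)]
  refine disjoint_left.2 fun x hxS hxT => ?_
  obtain ⟨y, hy, rfl⟩ := mem_image.1 hxT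
  have := mem_Icc.1 (hS hxS)
  have := mem_Icc.1 (hT hy)
  omega

lemma card_concat_inter_Icc (hS : S ⊆ Icc 1 t) (hT : T ⊆ Icc 1 r) (j : ℕ) :
    #(concat t S T ∩ Icc 1 j) = #(S ∩ Icc 1 j) + #(T ∩ Icc 1 (j - t)) := by
  rw [concat_inter_Icc hT, card_concat ((inter_subset_left).trans hS)
    ((inter_subset_left).trans hT)]

lemma concat_inter_Icc_self (hS : S ⊆ Icc 1 t) (hT : T ⊆ Icc 1 r) :
    concat t S T ∩ Icc 1 t = S := by
  rw [concat_inter_Icc hT, inter_eq_left.2 hS, Nat.sub_self, Icc_eq_empty (by omega),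
    inter_empty, concat, image_empty, union_empty]

lemma concat_subset (hS : S ⊆ Icc 1 t) (hT : T ⊆ Icc 1 r) : concat t S T ⊆ Icc 1 (t + r) := by
  intro x hx
  rcases mem_union.1 hx with hx | hx
  · have := mem_Icc.1 (hS hx)
    exact mem_Icc.2 ⟨this.1, by omega⟩
  · obtain ⟨y, hy, rfl⟩ := mem_image.1 hx
    have := mem_Icc.1 (hT hy)
    exact mem_Icc.2 ⟨by omega, by omega⟩

def suffix (t : ℕ) (F : Finset ℕ) : Finset ℕ :=
  (F \ Icc 1 t).image (· - t)

lemma suffix_subset {F : Finset ℕ} (hF : F ⊆ Icc 1 (t + r)) : suffix t F ⊆ Icc 1 r := by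
  intro x hx
  obtain ⟨y, hy, rfl⟩ := mem_image.1 hx
  obtain ⟨hyF, hyt⟩ := mem_sdiff.1 hy
  have := mem_Icc.1 (hF hyF)
  rw [mem_Icc] at hyt
  exact mem_Icc.2 ⟨by omega, by omega⟩

lemma suffix_concat (hS : S ⊆ Icc 1 t) (hT : T ⊆ Icc 1 r) : suffix t (concat t S T) = T := by
  ext x
  simp only [suffix, concat, mem_image, mem_sdiff, mem_union, mem_Icc]
  constructor
  · rintro ⟨y, ⟨hy | ⟨z, hz, rfl⟩, hyt⟩, rfl⟩
    · exact absurd (mem_Icc.1 (hS hy)) hyt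
    · simpa using hz
  · intro hx
    have := mem_Icc.1 (hT hx)
    exact ⟨x + t, ⟨Or.inr ⟨x, hx, rfl⟩, by omega⟩, by omega⟩

lemma concat_inter_suffix {F : Finset ℕ} (hF : F ⊆ Icc 1 (t + r)) :
    concat t (F ∩ Icc 1 t) (suffix t F) = F := by
  ext x
  simp only [suffix, concat, mem_image, mem_sdiff, mem_union, mem_inter, mem_Icc]
  constructor
  · rintro (⟨hx, -⟩ | ⟨_, ⟨y, ⟨hy, hyt⟩, rfl⟩, rfl⟩)
    · exact hx
    · have := mem_Icc.1 (hF hy)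
      rwa [Nat.sub_add_cancel (by omega)]
  · intro hx
    have := mem_Icc.1 (hF hx)
    by_cases hxt : x ≤ t
    · exact Or.inl ⟨hx, by omega, hxt⟩
    · exact Or.inr ⟨x - t, ⟨x, ⟨hx, by omega⟩, rfl⟩, by omega⟩

lemma mu_filter_concat (p : ℝ) (t r : ℕ) (P : Finset ℕ → Prop) [DecidablePred P] :
    mu (t + r) p ((Icc 1 (t + r)).powerset.filter P) =
      ∑ S ∈ (Icc 1 t).powerset, p ^ #S * (1 - p) ^ (t - #S) *
        mu r p ((Icc 1 r).powerset.filter fun T => P (concat t S T)) := by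
  simp only [mu, mul_sum, sum_filter]
  rw [← sum_product']
  symm
  refine sum_nbij' (fun ST => concat t ST.1 ST.2) (fun F => (F ∩ Icc 1 t, suffix t F))
    ?_ ?_ ?_ ?_ ?_
  · intro ST hST
    obtain ⟨hS, hT⟩ := mem_product.1 hST
    exact mem_powerset.2 (concat_subset (mem_powerset.1 hS) (mem_powerset.1 hT))
  · intro F hF
    exact mem_product.2 ⟨mem_powerset.2 inter_subset_right,
      mem_powerset.2 (suffix_subset (mem_powerset.1 hF))⟩
  · intro ST hST
    obtain ⟨hS, hT⟩ := mem_product.1 hST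
    rw [concat_inter_Icc_self (mem_powerset.1 hS) (mem_powerset.1 hT),
      suffix_concat (mem_powerset.1 hS) (mem_powerset.1 hT)]
  · intro F hF
    exact concat_inter_suffix (mem_powerset.1 hF)
  · intro ST hST
    obtain ⟨hS, hT⟩ := mem_product.1 hST
    have hS' := mem_powerset.1 hS
    have hT' := mem_powerset.1 hT
    have hSt : #ST.1 ≤ t := by simpa using card_le_card hS'
    have hTr : #ST.2 ≤ r := by simpa using card_le_card hT'
    simp only [card_concat hS' hT']
    split_ifs
    · rw [show t + r - (#ST.1 + #ST.2) = (t - #ST.1) + (r - #ST.2) by omega, pow_add, pow_add]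
      ring
    · simp

end Concat

section Walk

lemma reaches_zero (n : ℕ) (F : Finset ℕ) : Reaches n 0 F :=
  ⟨0, Nat.zero_le _, Nat.zero_le _⟩

lemma Reaches.le_card {n m : ℕ} {F : Finset ℕ} (h : Reaches n m F) : m ≤ #F := by
  obtain ⟨j, -, hj⟩ := h
  have h1 : #(F ∩ Icc 1 j) ≤ #F := card_le_card inter_subset_left
  have h2 : #(F ∩ Icc 1 j) ≤ j := by simpa using card_le_card (inter_subset_right (s₁ := F) (s₂ := Icc 1 j))
  omega

lemma reaches_concat {t r m : ℕ} {S T : Finset ℕ} (hS : S ⊆ Icc 1 t) (hT : T ⊆ Icc 1 r) :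
    Reaches (t + r) m (concat t S T) ↔ Reaches t m S ∨ Reaches r (m + t - 2 * #S) T := by
  have hlow : ∀ j ≤ t, #(T ∩ Icc 1 (j - t)) = 0 := fun j hj => by
    simp [Nat.sub_eq_zero_of_le hj]
  have hhigh : ∀ j ≥ t, S ∩ Icc 1 j = S := fun j hj =>
    inter_eq_left.2 (hS.trans (Icc_subset_Icc_right hj))
  simp only [Reaches, card_concat_inter_Icc hS hT]
  constructor
  · rintro ⟨j, hj, h⟩
    by_cases hjt : j ≤ t
    · exact Or.inl ⟨j, hjt, by rw [hlow j hjt] at h; omega⟩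
    by_cases hSt : t + m ≤ 2 * #S
    · exact Or.inl ⟨t, le_rfl, by rwa [hhigh t le_rfl]⟩
    · rw [hhigh j (by omega)] at h
      exact Or.inr ⟨j - t, by omega, by omega⟩
  · rintro (⟨j, hj, h⟩ | ⟨j, hj, h⟩)
    · exact ⟨j, by omega, by omega⟩
    · refine ⟨t + j, by omega, ?_⟩
      rw [hhigh _ (by omega), Nat.add_sub_cancel_left]
      have : #(S ∩ Icc 1 j) ≤ #S := card_le_card inter_subset_left
      omega

lemma mu_Fwalk_zero_level (p : ℝ) (n : ℕ) : mu n p (Fwalk n 0) = 1 := by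
  rw [Fwalk, filter_true_of_mem fun F _ => reaches_zero n F, mu_powerset]

lemma mu_Fwalk_zero (p : ℝ) (m : ℕ) : mu 0 p (Fwalk 0 (m + 1)) = 0 := by
  have : Fwalk 0 (m + 1) = ∅ := filter_eq_empty_iff.2 fun F hF h => by
    have := h.le_card
    simp_all
  simp [this, mu]

lemma mu_Fwalk_succ (p : ℝ) (n m : ℕ) :
    mu (n + 1) p (Fwalk (n + 1) (m + 1)) =
      p * mu n p (Fwalk n m) + (1 - p) * mu n p (Fwalk n (m + 2)) := by
  rw [Fwalk, Nat.add_comm n 1, mu_filter_concat, show (Icc 1 1).powerset = {∅, {1}} by decide,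
    sum_pair (by decide)]
  have hempty : ∀ T ∈ (Icc 1 n).powerset,
      Reaches (1 + n) (m + 1) (concat 1 ∅ T) ↔ Reaches n (m + 2) T := fun T hT => by
    rw [reaches_concat (empty_subset _) (mem_powerset.1 hT)]
    exact ⟨fun h => h.resolve_left fun h' => by simpa using h'.le_card, Or.inr⟩
  have hone : ∀ T ∈ (Icc 1 n).powerset,
      Reaches (1 + n) (m + 1) (concat 1 {1} T) ↔ Reaches n m T := fun T hT => by
    rw [reaches_concat (by simp) (mem_powerset.1 hT), card_singleton,
      show m + 1 + 1 - 2 * 1 = m by omega]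
    refine ⟨fun h => h.elim (fun h' => ?_) id, Or.inr⟩
    obtain rfl : m = 0 := by simpa using h'.le_card
    exact reaches_zero n T
  rw [filter_congr hempty, filter_congr hone]
  simp only [card_empty, card_singleton, Fwalk]
  ring

end Walk

section GamblersRuin

variable {p : ℝ}

lemma odds_pow_harmonic (hp : p < 1) (m : ℕ) :
    p * (p / (1 - p)) ^ m + (1 - p) * (p / (1 - p)) ^ (m + 2) = (p / (1 - p)) ^ (m + 1) := by
  have h : (1 - p) * (p / (1 - p)) = p := mul_div_cancel₀ p (by linarith)
  linear_combination ((p / (1 - p)) ^ (m + 1) - (p / (1 - p)) ^ m) * h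

lemma mu_Fwalk_le (hp : 0 ≤ p) (hp' : p < 1) (n m : ℕ) :
    mu n p (Fwalk n m) ≤ (p / (1 - p)) ^ m := by
  have hq : 0 ≤ 1 - p := by linarith
  induction n generalizing m with
  | zero =>
    cases m with
    | zero => rw [mu_Fwalk_zero_level, pow_zero]
    | succ m => rw [mu_Fwalk_zero]; positivity
  | succ n ih =>
    cases m with
    | zero => rw [mu_Fwalk_zero_level, pow_zero]
    | succ m =>
      rw [mu_Fwalk_succ, ← odds_pow_harmonic hp' m]
      exact add_le_add (mul_le_mul_of_nonneg_left (ih m) hp)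
        (mul_le_mul_of_nonneg_left (ih (m + 2)) hq)

lemma sqrt_div_mul_sqrt_mul (hp : 0 ≤ p) (hp' : p < 1) :
    √(p / (1 - p)) * √(p * (1 - p)) = p := by
  have : 1 - p ≠ 0 := by linarith
  rw [← Real.sqrt_mul (div_nonneg hp (by linarith)),
    show p / (1 - p) * (p * (1 - p)) = p ^ 2 by field_simp, Real.sqrt_sq hp]

lemma pow_sub_mu_Fwalk_le (hp : 0 ≤ p) (hp' : p ≤ 1 / 2) (n m : ℕ) :
    (p / (1 - p)) ^ m - mu n p (Fwalk n m) ≤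
      √(p / (1 - p)) ^ (m + 1) * (2 * √(p * (1 - p))) ^ n := by
  have hq : 0 ≤ 1 - p := by linarith
  set L := √(p / (1 - p)) with hL
  set R := 2 * √(p * (1 - p))
  have hL1 : L ≤ 1 := Real.sqrt_le_one.2 ((div_le_one (by linarith)).2 (by linarith))
  have hLsq : L ^ 2 = p / (1 - p) := Real.sq_sqrt (div_nonneg hp hq)
  have hLR : L * R = 2 * p := by
    rw [mul_left_comm, hL, sqrt_div_mul_sqrt_mul hp (by linarith)]
  have hqα : (1 - p) * (p / (1 - p)) = p := mul_div_cancel₀ p (by linarith)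
  -- `x = √α` minimises `p / x + (1 - p) * x`, with minimum `ρ`; this is where `ρ` comes from.
  have hstep : ∀ k n : ℕ, p * (L ^ (k + 1) * R ^ n) + (1 - p) * (L ^ (k + 3) * R ^ n) =
      L ^ (k + 2) * R ^ (n + 1) := fun k n => by
    linear_combination L ^ (k + 1) * R ^ n * ((1 - p) * hLsq + hqα - hLR)
  have hbase : ∀ n, 0 ≤ L ^ 1 * R ^ n := fun n => by positivity
  induction n generalizing m with
  | zero =>
    cases m with
    | zero => simpa [mu_Fwalk_zero_level] using hbase 0
    | succ m =>
      rw [mu_Fwalk_zero, sub_zero, pow_zero, mul_one, ← hLsq, ← pow_mul]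
      exact pow_le_pow_of_le_one (Real.sqrt_nonneg _) hL1 (by omega)
  | succ n ih =>
    cases m with
    | zero => simpa [mu_Fwalk_zero_level] using hbase (n + 1)
    | succ m =>
      rw [mu_Fwalk_succ, ← odds_pow_harmonic (by linarith) m, ← hstep]
      linear_combination p * ih m + (1 - p) * ih (m + 2)

end GamblersRuin

section Reflection

open scoped symmDiff

noncomputable def firstHit (t m : ℕ) (S : Finset ℕ) : ℕ :=
  if h : Reaches t m S then Nat.find h else 0

-- Reflection principle: the steps after the first visit to level `m` are reversed.
noncomputable def reflect (t m : ℕ) (S : Finset ℕ) : Finset ℕ :=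
  S ∆ Ioc (firstHit t m S) t

variable {t m j : ℕ} {S : Finset ℕ}

lemma card_inter_Icc_succ_le (S : Finset ℕ) (j : ℕ) :
    #(S ∩ Icc 1 (j + 1)) ≤ #(S ∩ Icc 1 j) + 1 := by
  refine (card_le_card fun x hx => ?_).trans (card_insert_le (j + 1) _)
  simp only [mem_insert, mem_inter, mem_Icc] at hx ⊢
  by_cases hxj : x = j + 1
  · exact Or.inl hxj
  · exact Or.inr ⟨hx.1, hx.2.1, by omega⟩

lemma firstHit_spec (h : Reaches t m S) :
    firstHit t m S ≤ t ∧ 2 * #(S ∩ Icc 1 (firstHit t m S)) = firstHit t m S + m := by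
  rw [firstHit, dif_pos h]
  obtain ⟨hle, hge⟩ := Nat.find_spec h
  refine ⟨hle, ?_⟩
  rcases Nat.eq_zero_or_pos (Nat.find h) with h0 | hpos
  · rw [h0] at hge ⊢
    simp only [Icc_eq_empty_of_lt zero_lt_one, inter_empty, card_empty] at hge ⊢
    omega
  · have hmin := Nat.find_min h (show Nat.find h - 1 < Nat.find h by omega)
    have hstep := card_inter_Icc_succ_le S (Nat.find h - 1)
    rw [Nat.sub_add_cancel hpos] at hstep
    omega

lemma two_mul_card_lt_of_lt_firstHit (hj : j < firstHit t m S) : 2 * #(S ∩ Icc 1 j) < j + m := by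
  unfold firstHit at hj
  split_ifs at hj with h
  · have hmin := Nat.find_min h hj
    have hle := (Nat.find_spec h).1
    omega
  · omega

lemma reflect_inter_Icc (hj : j ≤ firstHit t m S) : reflect t m S ∩ Icc 1 j = S ∩ Icc 1 j := by
  ext x
  simp only [reflect, mem_inter, mem_symmDiff, mem_Ioc, mem_Icc]
  constructor
  · rintro ⟨hx | ⟨hx, -⟩, hxj⟩ 
    · exact ⟨hx.1, hxj⟩
    · omega
  · rintro ⟨hx, hxj⟩
    exact ⟨Or.inl ⟨hx, by omega⟩, hxj⟩

lemma Reaches.reaches_reflect (h : Reaches t m S) : Reaches t m (reflect t m S) := by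
  obtain ⟨hle, heq⟩ := firstHit_spec h
  exact ⟨firstHit t m S, hle, by rw [reflect_inter_Icc le_rfl]; omega⟩

lemma Reaches.firstHit_reflect (h : Reaches t m S) :
    firstHit t m (reflect t m S) = firstHit t m S := by
  obtain ⟨hle, heq⟩ := firstHit_spec h
  rw [firstHit, dif_pos h.reaches_reflect]
  refine le_antisymm (Nat.find_min' _ ⟨hle, by rw [reflect_inter_Icc le_rfl]; omega⟩)
    (not_lt.1 fun hk => ?_)
  obtain ⟨-, hk'⟩ := Nat.find_spec h.reaches_reflect
  rw [reflect_inter_Icc hk.le] at hk'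
  have := two_mul_card_lt_of_lt_firstHit hk
  omega

lemma reflect_reflect (h : Reaches t m S) : reflect t m (reflect t m S) = S := by
  rw [reflect, h.firstHit_reflect, reflect, symmDiff_symmDiff_cancel_right]

lemma reflect_subset (hS : S ⊆ Icc 1 t) : reflect t m S ⊆ Icc 1 t := by
  intro x hx
  rcases mem_symmDiff.1 hx with ⟨hx, -⟩ | ⟨hx, -⟩
  · exact hS hx
  · have := mem_Ioc.1 hx
    exact mem_Icc.2 ⟨by omega, this.2⟩

lemma card_reflect (hS : S ⊆ Icc 1 t) (h : Reaches t m S) : #(reflect t m S) + #S = t + m := by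
  obtain ⟨hle, heq⟩ := firstHit_spec h
  set I := Ioc (firstHit t m S) t
  have hprefix : S \ I = S ∩ Icc 1 (firstHit t m S) := by
    ext x
    simp only [I, mem_sdiff, mem_inter, mem_Ioc, mem_Icc]
    constructor
    · rintro ⟨hx, hxI⟩
      have := mem_Icc.1 (hS hx)
      exact ⟨hx, this.1, by omega⟩
    · rintro ⟨hx, hx1, hxj⟩
      exact ⟨hx, by omega⟩
  have hrefl : #(reflect t m S) = #(S \ I) + #(I \ S) := by
    rw [reflect, symmDiff_def, sup_eq_union, card_union_of_disjoint disjoint_sdiff_sdiff]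
  have hI := card_sdiff_add_card_inter I S
  have hS' := card_sdiff_add_card_inter S I
  rw [inter_comm] at hI
  rw [Nat.card_Ioc] at hI
  rw [hprefix] at hrefl hS'
  omega

noncomputable def ballot (t a m : ℕ) : Finset (Finset ℕ) :=
  ((Icc 1 t).powersetCard a).filter fun S => ¬ Reaches t m S

lemma card_ballot_add_choose_le {t a b m : ℕ} (hab : a + b = t + m) (hb : t + m ≤ 2 * b) :
    #(ballot t a m) + t.choose b ≤ t.choose a := by
  have hsplit := card_filter_add_card_filter_not (s := (Icc 1 t).powersetCard a) (p := Reaches t m)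
  rw [card_powersetCard, Nat.card_Icc, Nat.add_sub_cancel, add_comm] at hsplit
  rw [ballot, ← hsplit, add_le_add_iff_left]
  have hreach : ∀ T ∈ (Icc 1 t).powersetCard b, Reaches t m T := fun T hT => by
    obtain ⟨hT, hcard⟩ := mem_powersetCard.1 hT
    exact ⟨t, le_rfl, by rw [inter_eq_left.2 hT, hcard]; exact hb⟩
  calc t.choose b = #((Icc 1 t).powersetCard b) := by simp
    _ ≤ _ := card_le_card_of_injOn (reflect t m) (fun T hT => by
        have hR := hreach T hT
        obtain ⟨hT, hcard⟩ := mem_powersetCard.1 hT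
        refine mem_filter.2 ⟨mem_powersetCard.2 ⟨reflect_subset hT, ?_⟩, hR.reaches_reflect⟩
        have := card_reflect hT hR
        omega)
      fun T₁ h₁ T₂ h₂ h => by
        rw [← reflect_reflect (hreach T₁ h₁), ← reflect_reflect (hreach T₂ h₂), h]

end Reflection

section Estimate

lemma card_ballot_le (ℓ i : ℕ) :
    (#(ballot (ℓ + 2 * i) (ℓ + i) (ℓ + 1)) : ℝ) ≤
      (Nat.choose (ℓ + 2 * i) i : ℝ) * ((ℓ + 1 : ℝ) / (ℓ + i + 1)) := by
  have hcount := card_ballot_add_choose_le (t := ℓ + 2 * i) (a := ℓ + i) (b := ℓ + i + 1)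
    (m := ℓ + 1) (by omega) (by omega)
  have hpascal := Nat.choose_succ_right_eq (ℓ + 2 * i) (ℓ + i)
  rw [show ℓ + 2 * i - (ℓ + i) = i by omega] at hpascal
  have hsymm : (ℓ + 2 * i).choose (ℓ + i) = (ℓ + 2 * i).choose i := by
    rw [show ℓ + 2 * i = ℓ + i + i by omega, Nat.choose_symm_add]
  rw [hsymm] at hcount hpascal
  have hcount' : (#(ballot (ℓ + 2 * i) (ℓ + i) (ℓ + 1)) : ℝ) +
      ((ℓ + 2 * i).choose (ℓ + i + 1) : ℝ) ≤ ((ℓ + 2 * i).choose i : ℝ) := by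
    exact_mod_cast hcount
  have hpascal' : ((ℓ + 2 * i).choose (ℓ + i + 1) : ℝ) * (ℓ + i + 1) =
      ((ℓ + 2 * i).choose i : ℝ) * i := by
    exact_mod_cast hpascal
  rw [mul_div_assoc', le_div_iff₀ (by positivity)]
  nlinarith

lemma Fhat_union_Fddot_inter_FF {n ℓ i : ℕ} (hn : ℓ + 2 * i ≤ n) :
    (Fhat n ℓ ∪ Fddot n ℓ) ∩ FF n ℓ i = (Icc 1 n).powerset.filter
      fun F => ¬ Reaches n (ℓ + 1) F ∧ #(F ∩ Icc 1 (ℓ + 2 * i)) = ℓ + i := by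
  ext F
  simp only [Fhat, Fddot, FF, mem_inter, mem_union, mem_filter, mem_powerset]
  constructor
  · rintro ⟨⟨hF, hR, -⟩ | ⟨hF, hR, -⟩, -, hcard⟩ <;>
    · have : ¬ ℓ + 2 * i + (ℓ + 1) ≤ 2 * #(F ∩ Icc 1 (ℓ + 2 * i)) := fun h => hR ⟨_, hn, h⟩
      exact ⟨hF, hR, by omega⟩
  · rintro ⟨hF, hR, hcard⟩
    -- `F` hits level `ℓ` at step `ℓ + 2 * i`.
    have hhit : 0 < hitCount n ℓ F :=
      card_pos.2 ⟨ℓ + 2 * i, mem_filter.2 ⟨mem_range.2 (by omega), by omega⟩⟩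
    rcases Nat.lt_or_ge (hitCount n ℓ F) 2 with h | h
    · exact ⟨Or.inl ⟨hF, hR, by omega⟩, hF, hcard.ge⟩
    · exact ⟨Or.inr ⟨hF, hR, h⟩, hF, hcard.ge⟩

lemma not_reaches_concat_iff {t r m a : ℕ} {S T : Finset ℕ} (hS : S ⊆ Icc 1 t)
    (hT : T ⊆ Icc 1 r) :
    (¬ Reaches (t + r) m (concat t S T) ∧ #(concat t S T ∩ Icc 1 t) = a) ↔
      S ∈ ballot t a m ∧ ¬ Reaches r (m + t - 2 * a) T := by
  rw [reaches_concat hS hT, concat_inter_Icc_self hS hT, ballot, mem_filter, mem_powersetCard]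
  constructor
  · rintro ⟨hR, rfl⟩
    exact ⟨⟨⟨hS, rfl⟩, fun h => hR (Or.inl h)⟩, fun h => hR (Or.inr h)⟩
  · rintro ⟨⟨⟨-, rfl⟩, hS'⟩, hT'⟩
    exact ⟨fun h => h.elim hS' hT', rfl⟩

lemma mu_not_reaches_card_prefix_eq (p : ℝ) (t a m r : ℕ) :
    mu (t + r) p ((Icc 1 (t + r)).powerset.filter
        fun F => ¬ Reaches (t + r) m F ∧ #(F ∩ Icc 1 t) = a) =
      #(ballot t a m) * (p ^ a * (1 - p) ^ (t - a)) *
        (1 - mu r p (Fwalk r (m + t - 2 * a))) := by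
  have hsub : ballot t a m ⊆ (Icc 1 t).powerset := fun S hS =>
    mem_powerset.2 (mem_powersetCard.1 (mem_filter.1 hS).1).1
  rw [mu_filter_concat, ← sum_subset hsub fun S hS hb => ?outside]
  case outside =>
    rw [filter_false_of_mem fun T hT h =>
      hb ((not_reaches_concat_iff (mem_powerset.1 hS) (mem_powerset.1 hT)).1 h).1]
    simp [mu]
  rw [← nsmul_eq_mul, ← sum_const, sum_mul]
  refine sum_congr rfl fun S hS => ?_
  obtain ⟨⟨hSt, rfl⟩, -⟩ := mem_filter.1 hS |>.imp_left mem_powersetCard.1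
  rw [filter_congr fun T hT => (not_reaches_concat_iff hSt (mem_powerset.1 hT)).trans
    (and_iff_right hS), mu_filter_not, Fwalk]

variable {p : ℝ}

lemma fLP_pos (hp : 0 < p) (hp' : p < 1 / 2) (ℓ i : ℕ) : 0 < fLP ℓ i p := by
  have hq : 0 < 1 - p := by linarith
  have hα : p / (1 - p) < 1 := (div_lt_one hq).2 (by linarith)
  have : 0 < 1 - p / (1 - p) := by linarith
  unfold fLP
  positivity

lemma mu_Ftilde_union_le (hp : 0 < p) (hp' : p < 1 / 2) (ℓ i r : ℕ) :
    mu (ℓ + 2 * i + r) p (Ftilde (ℓ + 2 * i + r) ℓ ∪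
        ((Fhat (ℓ + 2 * i + r) ℓ ∪ Fddot (ℓ + 2 * i + r) ℓ) ∩ FF (ℓ + 2 * i + r) ℓ i)) ≤
      fLP ℓ i p + (Nat.choose (ℓ + 2 * i) i : ℝ) * ((ℓ + 1 : ℝ) / (ℓ + i + 1)) *
        p ^ (ℓ + i) * (1 - p) ^ i * (p / (1 - p) * (2 * √(p * (1 - p))) ^ r) := by
  have hq : 0 ≤ 1 - p := by linarith
  have hα : p / (1 - p) ≤ 1 := (div_le_one (by linarith)).2 (by linarith)
  have hstay : 1 - mu r p (Fwalk r 1) ≤ 1 - p / (1 - p) + p / (1 - p) * (2 * √(p * (1 - p))) ^ r := by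
    have := pow_sub_mu_Fwalk_le hp.le hp'.le r 1
    rw [Real.sq_sqrt (div_nonneg hp.le hq)] at this
    linarith
  have hstay0 : 0 ≤ 1 - mu r p (Fwalk r 1) := by
    have := mu_Fwalk_le hp.le (by linarith) r 1
    linarith
  have hbar : mu (ℓ + 2 * i + r) p
      ((Fhat (ℓ + 2 * i + r) ℓ ∪ Fddot (ℓ + 2 * i + r) ℓ) ∩ FF (ℓ + 2 * i + r) ℓ i) ≤
      (Nat.choose (ℓ + 2 * i) i : ℝ) * ((ℓ + 1 : ℝ) / (ℓ + i + 1)) * (p ^ (ℓ + i) * (1 - p) ^ i) *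
        (1 - p / (1 - p) + p / (1 - p) * (2 * √(p * (1 - p))) ^ r) := by
    rw [Fhat_union_Fddot_inter_FF (by omega), mu_not_reaches_card_prefix_eq,
      show ℓ + 1 + (ℓ + 2 * i) - 2 * (ℓ + i) = 1 by omega,
      show ℓ + 2 * i - (ℓ + i) = i by omega]
    exact mul_le_mul (mul_le_mul_of_nonneg_right (card_ballot_le ℓ i) (by positivity)) hstay
      hstay0 (by positivity)
  calc _ ≤ mu (ℓ + 2 * i + r) p (Ftilde (ℓ + 2 * i + r) ℓ) + mu (ℓ + 2 * i + r) p
          ((Fhat (ℓ + 2 * i + r) ℓ ∪ Fddot (ℓ + 2 * i + r) ℓ) ∩ FF (ℓ + 2 * i + r) ℓ i) :=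
        mu_union_le hp.le (by linarith) _ _ _
    _ ≤ _ := add_le_add (mu_Fwalk_le hp.le (by linarith) _ _) hbar
    _ = _ := by unfold fLP; ring

end Estimate

theorem statement_11_general (p : ℝ) (hp : 0 < p) (hp' : p < 1 / 2) (ℓ i : ℕ) :
    ∃ n₀ : ℕ, ∀ n : ℕ, n₀ < n →
      mu n p (Ftilde n ℓ ∪ ((Fhat n ℓ ∪ Fddot n ℓ) ∩ FF n ℓ i)) <
        1.001 * fLP ℓ i p := by
  set C := (Nat.choose (ℓ + 2 * i) i : ℝ) * ((ℓ + 1 : ℝ) / (ℓ + i + 1)) * p ^ (ℓ + i) *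
    (1 - p) ^ i
  set ρ := 2 * √(p * (1 - p))
  have hρ : ρ < 1 := by
    have : p * (1 - p) < (1 / 2) ^ 2 := by nlinarith
    have := Real.sqrt_lt_sqrt (by nlinarith) this
    rw [Real.sqrt_sq (by norm_num)] at this
    linarith
  have hlim : Filter.Tendsto (fun r => fLP ℓ i p + C * (p / (1 - p) * ρ ^ r)) Filter.atTop
      (nhds (fLP ℓ i p)) := by
    simpa using tendsto_const_nhds.add (((tendsto_pow_atTop_nhds_zero_of_lt_one
      (by positivity) hρ).const_mul (p / (1 - p))).const_mul C)
  have hf := fLP_pos hp hp' ℓ i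
  obtain ⟨r₀, hr₀⟩ := Filter.eventually_atTop.1
    (hlim.eventually (gt_mem_nhds (lt_mul_of_one_lt_left hf (by norm_num : (1 : ℝ) < 1.001))))
  refine ⟨ℓ + 2 * i + r₀, fun n hn => ?_⟩
  obtain ⟨r, rfl⟩ : ∃ r, n = ℓ + 2 * i + r := ⟨n - (ℓ + 2 * i), by omega⟩
  exact (mu_Ftilde_union_le hp hp' ℓ i r).trans_lt (hr₀ r (by omega))

/-- the key weight estimate `μ_p(tilde F^ℓ ∪ bar F^ℓ_i) < 1.001 f(ℓ,i,p)`. -/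
theorem statement_11 (p : ℝ) (hp : 0 < p) (hp' : p < 1 / 2) (ℓ i : ℕ) (hl : 1 ≤ ℓ) :
    ∃ n₀ : ℕ, ∀ n : ℕ, n₀ < n →
      mu n p (Ftilde n ℓ ∪ ((Fhat n ℓ ∪ Fddot n ℓ) ∩ FF n ℓ i)) <
        1.001 * fLP ℓ i p :=
  statement_11_general p hp hp' ℓ i
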